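/- arXiv:1903.03103 — 4 statements merged into one kernel-verified Lean document; each statement's English description precedes it below -/
import Mathlib

section
/- Under the hypotheses of Lemma 3.2 (Lemma `NonConvex'): if at a point x₀ the Hessian D²η(∇u(x₀)) has eigenvalues γ₁ ≤ γ₂ ≤ ... ≤ γₙ with γ₂ > 0 and γ₁ ≥ -λγ₂ for λ = λ(n,m) sufficiently small, and m⁻¹I ≤ D²F ≤ mI at ∇u(x₀), then F_{ij}u_{jk}η_{kl}u_{li}(x₀) ≥ 0, where u solves F_{ij}(∇u)u_{ij} = 0. -/
/-!
With `A = D²F(∇u(x₀))`, `B = D²u(x₀)` and `η` diagonal, the quantity is `∑ₖ γₖ ⟪A bₖ, bₖ⟫`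
for the columns `bₖ` of `B`, and `⟪A bₖ, bₖ⟫` is comparable to `|bₖ|²` up to the factor `m`.
Only `γ₁` may be negative, so it suffices that `|b₁|²` is controlled by `∑_{k ≥ 2} |bₖ|²`.
This is where the equation enters: `tr(AB) = 0` with `A₁₁ ≥ m⁻¹` and `|Aᵢⱼ| ≤ m` gives,
by Cauchy–Schwarz, `B₁₁² ≤ m⁴n² ∑_{(i,j) ≠ (1,1)} Bᵢⱼ²`, and by symmetry of `B` the remaining
entries of `b₁` already occur in the other columns.
-/

noncomputable def pd2 (n : ℕ) (f : (Fin n → ℝ) → ℝ) (x : Fin n → ℝ) (i j : Fin n) : ℝ :=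
  fderiv ℝ (fun y => fderiv ℝ f y (Pi.single i 1)) x (Pi.single j 1)

noncomputable def gradV (n : ℕ) (u : (Fin n → ℝ) → ℝ) (x : Fin n → ℝ) : Fin n → ℝ :=
  fun i => fderiv ℝ u x (Pi.single i 1)

open Finset

section

variable {ι : Type*} [Fintype ι]

def quadForm (A : ι → ι → ℝ) (v : ι → ℝ) : ℝ := ∑ i, ∑ j, A i j * v i * v j

def IsEllipticWith (m : ℝ) (A : ι → ι → ℝ) : Prop :=
  ∀ v : ι → ℝ, m⁻¹ * ∑ i, v i ^ 2 ≤ quadForm A v ∧ quadForm A v ≤ m * ∑ i, v i ^ 2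

section single

variable [DecidableEq ι]

lemma quadForm_single (A : ι → ι → ℝ) (i : ι) : quadForm A (Pi.single i 1) = A i i := by
  simp [quadForm, Pi.single_apply]

lemma quadForm_single_add_single (A : ι → ι → ℝ) (i j : ι) (s : ℝ) :
    quadForm A (Pi.single i 1 + Pi.single j s) = A i i + s * (A i j + A j i) + s ^ 2 * A j j := by
  simp [quadForm, Pi.single_apply, add_mul, mul_add, sum_add_distrib]
  ring

lemma sum_sq_single_add_single {i j : ι} (hij : i ≠ j) (s : ℝ) :
    ∑ k, (Pi.single i 1 + Pi.single j s : ι → ℝ) k ^ 2 = 1 + s ^ 2 := by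
  simp [Pi.single_apply, add_sq, sum_add_distrib, hij.symm]

end single

namespace IsEllipticWith

variable {m : ℝ} {A : ι → ι → ℝ}

lemma inv_le_apply_self (hA : IsEllipticWith m A) (i : ι) : m⁻¹ ≤ A i i := by
  classical
  simpa [quadForm_single, Pi.single_apply] using (hA (Pi.single i 1)).1

lemma apply_self_le (hA : IsEllipticWith m A) (i : ι) : A i i ≤ m := by
  classical
  simpa [quadForm_single, Pi.single_apply] using (hA (Pi.single i 1)).2

lemma abs_apply_le (hA : IsEllipticWith m A) (hm : 0 < m) (hsymm : ∀ i j, A i j = A j i)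
    (i j : ι) : |A i j| ≤ m := by
  classical
  have hdiag (k : ι) : 0 ≤ A k k := (inv_pos.2 hm).le.trans (hA.inv_le_apply_self k)
  obtain rfl | hij := eq_or_ne i j
  · exact abs_le.2 ⟨by linarith [hdiag i], hA.apply_self_le i⟩
  have hplus := (hA (Pi.single i 1 + Pi.single j 1)).2
  have hminus := (hA (Pi.single i 1 + Pi.single j (-1))).2
  rw [quadForm_single_add_single, sum_sq_single_add_single hij, hsymm j i] at hplus hminus
  exact abs_le.2 ⟨by linarith [hdiag i, hdiag j], by linarith [hdiag i, hdiag j]⟩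

end IsEllipticWith

lemma sq_le_of_sum_mul_eq_zero {κ : Type*} [Fintype κ] [DecidableEq κ] {m : ℝ} (hm : 0 < m)
    {a b : κ → ℝ} (hab : ∑ p, a p * b p = 0) (ha : ∀ p, |a p| ≤ m) {p₀ : κ} (hp₀ : m⁻¹ ≤ a p₀) :
    b p₀ ^ 2 ≤ m ^ 4 * Fintype.card κ * ∑ p ∈ univ.erase p₀, b p ^ 2 := by
  have hsplit : a p₀ * b p₀ = -∑ p ∈ univ.erase p₀, a p * b p := by
    rw [sum_erase_eq_sub (mem_univ p₀), hab]; ring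
  have hcs : (a p₀ * b p₀) ^ 2 ≤ (∑ p ∈ univ.erase p₀, a p ^ 2) * ∑ p ∈ univ.erase p₀, b p ^ 2 := by
    rw [hsplit, neg_sq]; exact sum_mul_sq_le_sq_mul_sq _ _ _
  have ha_sq : ∑ p ∈ univ.erase p₀, a p ^ 2 ≤ Fintype.card κ * m ^ 2 :=
    calc ∑ p ∈ univ.erase p₀, a p ^ 2 ≤ ∑ p ∈ univ.erase p₀, m ^ 2 :=
          sum_le_sum fun p _ => sq_le_sq' (abs_le.1 (ha p)).1 (abs_le.1 (ha p)).2
      _ ≤ Fintype.card κ * m ^ 2 := by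
          rw [sum_const, nsmul_eq_mul]
          gcongr
          exact_mod_cast card_le_univ _
  have hb_lower : m⁻¹ ^ 2 * b p₀ ^ 2 ≤ (a p₀ * b p₀) ^ 2 := by
    rw [mul_pow]; gcongr
  have hS : 0 ≤ ∑ p ∈ univ.erase p₀, b p ^ 2 := sum_nonneg fun p _ => sq_nonneg _
  calc b p₀ ^ 2 = m ^ 2 * (m⁻¹ ^ 2 * b p₀ ^ 2) := by field_simp
    _ ≤ m ^ 2 * ((Fintype.card κ * m ^ 2) * ∑ p ∈ univ.erase p₀, b p ^ 2) := by
        refine mul_le_mul_of_nonneg_left ?_ (by positivity)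
        exact hb_lower.trans (hcs.trans (mul_le_mul_of_nonneg_right ha_sq hS))
    _ = m ^ 4 * Fintype.card κ * ∑ p ∈ univ.erase p₀, b p ^ 2 := by ring

lemma IsEllipticWith.sum_sq_col_le [DecidableEq ι] {m : ℝ} (hm : 0 < m) {A B : ι → ι → ℝ}
    (hA : IsEllipticWith m A) (hAsymm : ∀ i j, A i j = A j i) (hBsymm : ∀ i j, B i j = B j i)
    (hAB : ∑ i, ∑ j, A i j * B i j = 0) (i₀ : ι) :
    ∑ i, B i i₀ ^ 2 ≤
      (2 * m ^ 4 * Fintype.card ι ^ 2 + 1) * ∑ k ∈ univ.erase i₀, ∑ i, B i k ^ 2 := by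
  set N : ι → ℝ := fun k => ∑ i, B i k ^ 2
  set T := ∑ k ∈ univ.erase i₀, N k
  set M : ℝ := m ^ 4 * Fintype.card ι ^ 2
  have hdiag : B i₀ i₀ ^ 2 ≤ M * ∑ p ∈ univ.erase (i₀, i₀), B p.1 p.2 ^ 2 := by
    have := sq_le_of_sum_mul_eq_zero hm (a := fun p : ι × ι => A p.1 p.2)
      (b := fun p => B p.1 p.2) (p₀ := (i₀, i₀)) (by rwa [Fintype.sum_prod_type])
      (fun p => hA.abs_apply_le hm hAsymm _ _) (hA.inv_le_apply_self i₀)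
    simpa [M, Fintype.card_prod, sq, mul_assoc] using this
  have hrest : ∑ p ∈ univ.erase (i₀, i₀), B p.1 p.2 ^ 2 = (N i₀ - B i₀ i₀ ^ 2) + T := by
    rw [sum_erase_eq_sub (mem_univ _), Fintype.sum_prod_type, sum_comm,
      ← add_sum_erase _ _ (mem_univ i₀)]
    ring
  have hoff : N i₀ - B i₀ i₀ ^ 2 ≤ T := by
    rw [← sum_erase_eq_sub (mem_univ i₀)]
    refine sum_le_sum fun i _ => ?_
    rw [hBsymm]
    exact single_le_sum (f := fun j => B j i ^ 2) (fun j _ => sq_nonneg _) (mem_univ i₀)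
  have hM : 0 ≤ M := by positivity
  have := mul_le_mul_of_nonneg_left hoff hM
  rw [hrest] at hdiag
  linarith

lemma sum_mul_nonneg_of_le_mul_sum_erase [DecidableEq ι] {γ Q : ι → ℝ} {i₀ : ι} {g lam K : ℝ}
    (hQ : ∀ k, 0 ≤ Q k) (hQi₀ : Q i₀ ≤ K * ∑ k ∈ univ.erase i₀, Q k) (hg : 0 ≤ g)
    (hγ : ∀ k ≠ i₀, g ≤ γ k) (hlam : 0 ≤ lam) (hlamK : lam * K ≤ 1) (hγi₀ : -lam * g ≤ γ i₀) :
    0 ≤ ∑ k, γ k * Q k := by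
  set S := ∑ k ∈ univ.erase i₀, Q k
  have hS : 0 ≤ S := sum_nonneg fun k _ => hQ k
  have hrest : g * S ≤ ∑ k ∈ univ.erase i₀, γ k * Q k := by
    rw [mul_sum]
    exact sum_le_sum fun k hk => mul_le_mul_of_nonneg_right (hγ k (ne_of_mem_erase hk)) (hQ k)
  have hfirst : -lam * g * Q i₀ ≤ γ i₀ * Q i₀ := mul_le_mul_of_nonneg_right hγi₀ (hQ i₀)
  have hdom : lam * g * Q i₀ ≤ g * S :=
    calc lam * g * Q i₀ ≤ lam * g * (K * S) := mul_le_mul_of_nonneg_left hQi₀ (by positivity)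
      _ = (lam * K) * (g * S) := by ring
      _ ≤ g * S := mul_le_of_le_one_left (by positivity) hlamK
  rw [← add_sum_erase _ _ (mem_univ i₀)]
  linarith

lemma sum_mul_mul_diagonal_mul [DecidableEq ι] {A B D : ι → ι → ℝ} {γ : ι → ℝ}
    (hD : ∀ k l, D k l = if k = l then γ k else 0) (hBsymm : ∀ i j, B i j = B j i) :
    ∑ i, ∑ j, ∑ k, ∑ l, A i j * B j k * D k l * B l i = ∑ k, γ k * quadForm A (fun i => B i k) := by
  simp only [hD, mul_ite, mul_zero, ite_mul, zero_mul, sum_ite_eq, mem_univ, if_true, quadForm,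
    mul_sum]
  refine (sum_congr rfl fun i _ => sum_comm).trans <| sum_comm.trans <|
    sum_congr rfl fun k _ => sum_congr rfl fun i _ => sum_congr rfl fun j _ => ?_
  rw [hBsymm k i]
  ring

lemma IsEllipticWith.sum_mul_quadForm_col_nonneg [DecidableEq ι] {m : ℝ} (hm : 0 < m)
    {A B : ι → ι → ℝ}
    (hA : IsEllipticWith m A) (hAsymm : ∀ i j, A i j = A j i) (hBsymm : ∀ i j, B i j = B j i)
    (hAB : ∑ i, ∑ j, A i j * B i j = 0) {γ : ι → ℝ} {i₀ : ι} {g : ℝ} (hg : 0 ≤ g)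
    (hγ : ∀ k ≠ i₀, g ≤ γ k)
    (hγi₀ : -(m ^ 2 * (2 * m ^ 4 * Fintype.card ι ^ 2 + 1))⁻¹ * g ≤ γ i₀) :
    0 ≤ ∑ k, γ k * quadForm A (fun i => B i k) := by
  set C : ℝ := 2 * m ^ 4 * Fintype.card ι ^ 2 + 1
  set N : ι → ℝ := fun k => ∑ i, B i k ^ 2
  set Q : ι → ℝ := fun k => quadForm A (fun i => B i k)
  have hNQ (k : ι) : N k ≤ m * Q k := by
    have := (hA fun i => B i k).1
    rwa [inv_mul_le_iff₀ hm] at this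
  have hQi₀ : Q i₀ ≤ m ^ 2 * C * ∑ k ∈ univ.erase i₀, Q k :=
    calc Q i₀ ≤ m * N i₀ := (hA fun i => B i i₀).2
      _ ≤ m * (C * ∑ k ∈ univ.erase i₀, N k) :=
          mul_le_mul_of_nonneg_left (hA.sum_sq_col_le hm hAsymm hBsymm hAB i₀) hm.le
      _ ≤ m * (C * (m * ∑ k ∈ univ.erase i₀, Q k)) := by
          gcongr; rw [mul_sum]; exact sum_le_sum fun k _ => hNQ k
      _ = m ^ 2 * C * ∑ k ∈ univ.erase i₀, Q k := by ring
  refine sum_mul_nonneg_of_le_mul_sum_erase (fun k => ?_) hQi₀ hg hγ (by positivity)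
    (inv_mul_cancel₀ (by positivity)).le hγi₀
  exact le_trans (by positivity) (hA fun i => B i k).1

end

/-- Pointwise version of Lemma `NonConvex`: if `D²η(∇u(x₀))` is diagonal with eigenvalues
`γ₁ ≤ ⋯ ≤ γₙ`, `γ₂ > 0` and `γ₁ ≥ -λγ₂` for `λ = λ(n,m)` small, and `D²F` is elliptic at
`∇u(x₀)`, then `F_{ij}u_{jk}η_{kl}u_{li}(x₀) ≥ 0`. -/
theorem stmt7 (n : ℕ) (hn : 2 ≤ n) (m : ℝ) (hm : 0 < m) :
    ∃ lam > (0 : ℝ), ∀ (F η u : (Fin n → ℝ) → ℝ) (x₀ γ : Fin n → ℝ),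
      (∀ i j, pd2 n u x₀ i j = pd2 n u x₀ j i) →
      (∀ i j, pd2 n F (gradV n u x₀) i j = pd2 n F (gradV n u x₀) j i) →
      (∑ i, ∑ j, pd2 n F (gradV n u x₀) i j * pd2 n u x₀ i j = 0) →
      (∀ v : Fin n → ℝ,
        m⁻¹ * ∑ i, v i ^ 2 ≤ ∑ i, ∑ j, pd2 n F (gradV n u x₀) i j * v i * v j ∧
        ∑ i, ∑ j, pd2 n F (gradV n u x₀) i j * v i * v j ≤ m * ∑ i, v i ^ 2) →
      (∀ i j, pd2 n η (gradV n u x₀) i j = if i = j then γ i else 0) →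
      Monotone γ →
      0 < γ ⟨1, by omega⟩ →
      -lam * γ ⟨1, by omega⟩ ≤ γ ⟨0, by omega⟩ →
      0 ≤ ∑ i, ∑ j, ∑ k, ∑ l, pd2 n F (gradV n u x₀) i j * pd2 n u x₀ j k *
          pd2 n η (gradV n u x₀) k l * pd2 n u x₀ l i := by
  refine ⟨(m ^ 2 * (2 * m ^ 4 * n ^ 2 + 1))⁻¹, by positivity, ?_⟩
  intro F η u x₀ γ hu hF hFu hell hη hγ hγ₁ hγ₀
  rw [sum_mul_mul_diagonal_mul hη hu]
  have hγk (k : Fin n) (hk : k ≠ ⟨0, by omega⟩) : γ ⟨1, by omega⟩ ≤ γ k :=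
    hγ (Fin.le_def.2 (Nat.one_le_iff_ne_zero.2 fun h => hk (Fin.ext h)))
  exact IsEllipticWith.sum_mul_quadForm_col_nonneg hm hell hF hu hFu hγ₁.le hγk
    (by simpa using hγ₀)
end

section
/- Define η_A(p,q) = exp(A²|q|²/2 - A|p|) for (p,q) ∈ ℝ² × ℝ^{n-2}, p ≠ 0. In suitable orthonormal coordinates (with one direction along p/|p|), the Hessian satisfies (A²η_A)⁻¹D²η_A = diag(-(A|p|)⁻¹, 1, ..., 1) + O(A⁻²) on the region {|q| < A⁻³, |p| ≥ ε₁/4}; in particular, for A large D²η_A has exactly one negative eigenvalue γ₁ and the others positive, with γ₁ ≥ -λγ₂ for any fixed λ > 0 once A is large enough. -/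
/-- `η_A(p,q) = exp(A²|q|²/2 - A|p|)` on `ℝ² × ℝ^{n-2}` (here `m = n - 2`). -/
noncomputable def etaA (m : ℕ) (A : ℝ) (x : (ℝ × ℝ) × EuclideanSpace ℝ (Fin m)) : ℝ :=
  Real.exp (A ^ 2 * ‖x.2‖ ^ 2 / 2 - A * Real.sqrt (x.1.1 ^ 2 + x.1.2 ^ 2))

/-- second derivative of `f` at `x` as a bilinear form evaluated at `(v, w)`. -/
noncomputable def D2 (m : ℕ) (f : (ℝ × ℝ) × EuclideanSpace ℝ (Fin m) → ℝ)
    (x v w : (ℝ × ℝ) × EuclideanSpace ℝ (Fin m)) : ℝ :=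
  fderiv ℝ (fun y => fderiv ℝ f y v) x w

/-!
Writing `η_A = exp φ` with `φ(p, q) = A²|q|²/2 - A|p|`, one has `D²η_A = η_A (Dφ ⊗ Dφ + D²φ)`.
In the orthonormal frame `e₁ = p^⊥/|p|`, `e₂ = p/|p|`, followed by the `q`-directions,
`Dφ = (0, -A, A²q)` and `D²φ = diag(-A/|p|, 0, A², …, A²)`, so `(A²η_A)⁻¹ D²η_A` evaluated at
`c e₁ + a e₂ + z` and `c' e₁ + a' e₂ + z'` equals
`(A⟪q, z⟫ - a)(A⟪q, z'⟫ - a') + ⟪z, z'⟫ - c c'/(A|p|)`.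
For `|q| < A⁻³` the terms `A⟪q, ·⟫` are `O(A⁻²)`, which gives all the entry estimates; on the
span of `e₂` and the `q`-directions the form is at least `1/2`, while its value
`-(A|p|)⁻¹` on `e₁` is at least `-λ/2` as soon as `A|p| ≥ 2/λ`.
-/

open Real Filter Topology ContinuousLinearMap
open scoped RealInnerProductSpace

theorem fderiv_fderiv_exp_comp_apply {E : Type*} [NormedAddCommGroup E] [NormedSpace ℝ E]
    {φ : E → ℝ} {φ'' : E →L[ℝ] ℝ} {x v : E} (hφ : ∀ᶠ y in 𝓝 x, DifferentiableAt ℝ φ y)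
    (hφv : HasFDerivAt (fun y => fderiv ℝ φ y v) φ'' x) (w : E) :
    fderiv ℝ (fun y => fderiv ℝ (fun y => exp (φ y)) y v) x w =
      exp (φ x) * (fderiv ℝ φ x v * fderiv ℝ φ x w + φ'' w) := by
  have hexp : (fun y => fderiv ℝ (fun y => exp (φ y)) y v) =ᶠ[𝓝 x]
      fun y => exp (φ y) * fderiv ℝ φ y v := by
    filter_upwards [hφ] with y hy
    simp [fderiv_exp hy]
  rw [hexp.fderiv_eq, fderiv_fun_mul hφ.self_of_nhds.exp hφv.differentiableAt, hφv.fderiv,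
    fderiv_exp hφ.self_of_nhds]
  simp only [add_apply, FunLike.coe_smul, Pi.smul_apply, smul_eq_mul]
  ring

section Radius

variable {p : ℝ × ℝ} (hp : p ≠ 0)
include hp

theorem sqrt_sq_add_sq_pos : 0 < √(p.1 ^ 2 + p.2 ^ 2) := by
  refine Real.sqrt_pos.2 (lt_of_le_of_ne (by positivity) fun h => hp ?_)
  ext <;> simp <;> nlinarith [sq_nonneg p.1, sq_nonneg p.2]

theorem hasFDerivAt_sqrt_sq_add_sq :
    HasFDerivAt (fun p : ℝ × ℝ => √(p.1 ^ 2 + p.2 ^ 2))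
      ((√(p.1 ^ 2 + p.2 ^ 2))⁻¹ • (p.1 • fst ℝ ℝ ℝ + p.2 • snd ℝ ℝ ℝ)) p := by
  have h₁ : HasFDerivAt (fun p : ℝ × ℝ => p.1 ^ 2) _ p := (hasFDerivAt_fst (𝕜 := ℝ) (p := p)).pow 2
  have h₂ : HasFDerivAt (fun p : ℝ × ℝ => p.2 ^ 2) _ p := (hasFDerivAt_snd (𝕜 := ℝ) (p := p)).pow 2
  have hr := sqrt_sq_add_sq_pos hp
  refine ((h₁.add h₂).sqrt (Real.sqrt_pos.1 hr).ne').congr_fderiv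
    (ContinuousLinearMap.ext fun u => ?_)
  simp
  field_simp

end Radius

section Exponent

variable {G : Type*} [NormedAddCommGroup G] [InnerProductSpace ℝ G]

noncomputable def etaExponent (A : ℝ) (y : (ℝ × ℝ) × G) : ℝ :=
  A ^ 2 * ‖y.2‖ ^ 2 / 2 - A * √(y.1.1 ^ 2 + y.1.2 ^ 2)

theorem hasFDerivAt_etaExponent (A : ℝ) {y : (ℝ × ℝ) × G} (hy : y.1 ≠ 0) :
    HasFDerivAt (etaExponent A)
      ((A ^ 2 / 2) • (2 • innerSL ℝ y.2).comp (snd ℝ (ℝ × ℝ) G) -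
        A • ((√(y.1.1 ^ 2 + y.1.2 ^ 2))⁻¹ •
          (y.1.1 • fst ℝ ℝ ℝ + y.1.2 • snd ℝ ℝ ℝ)).comp (fst ℝ (ℝ × ℝ) G)) y := by
  have hq := ((hasStrictFDerivAt_norm_sq y.2).hasFDerivAt.comp y hasFDerivAt_snd).const_mul
    (A ^ 2 / 2)
  have hp := ((hasFDerivAt_sqrt_sq_add_sq hy).comp y hasFDerivAt_fst).const_mul A
  refine (hq.sub hp).congr_of_eventuallyEq (.of_forall fun z => ?_)
  simp [etaExponent]
  ring

theorem fderiv_etaExponent_apply (A : ℝ) {y : (ℝ × ℝ) × G} (hy : y.1 ≠ 0) (v : (ℝ × ℝ) × G) :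
    fderiv ℝ (etaExponent A) y v =
      A ^ 2 * ⟪y.2, v.2⟫ - A * (y.1.1 * v.1.1 + y.1.2 * v.1.2) / √(y.1.1 ^ 2 + y.1.2 ^ 2) := by
  rw [(hasFDerivAt_etaExponent A hy).fderiv]
  simp
  ring

theorem hasFDerivAt_fderiv_etaExponent_apply (A : ℝ) {x : (ℝ × ℝ) × G} (hx : x.1 ≠ 0)
    (v : (ℝ × ℝ) × G) :
    HasFDerivAt (fun y => fderiv ℝ (etaExponent A) y v)
      (A ^ 2 • (innerSL ℝ v.2).comp (snd ℝ (ℝ × ℝ) G) -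
        (A / √(x.1.1 ^ 2 + x.1.2 ^ 2)) •
          (v.1.1 • fst ℝ ℝ ℝ + v.1.2 • snd ℝ ℝ ℝ).comp (fst ℝ (ℝ × ℝ) G) +
        (A * (x.1.1 * v.1.1 + x.1.2 * v.1.2) / √(x.1.1 ^ 2 + x.1.2 ^ 2) ^ 3) •
          (x.1.1 • fst ℝ ℝ ℝ + x.1.2 • snd ℝ ℝ ℝ).comp (fst ℝ (ℝ × ℝ) G)) x := by
  have hr := (sqrt_sq_add_sq_pos hx).ne'
  have hinner : HasFDerivAt (fun y : (ℝ × ℝ) × G => ⟪y.2, v.2⟫) _ x :=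
    hasFDerivAt_snd.inner ℝ (hasFDerivAt_const v.2 x)
  have hdot : HasFDerivAt (fun y : (ℝ × ℝ) × G => y.1.1 * v.1.1 + y.1.2 * v.1.2)
      ((v.1.1 • fst ℝ ℝ ℝ + v.1.2 • snd ℝ ℝ ℝ).comp (fst ℝ (ℝ × ℝ) G)) x := by
    refine ContinuousLinearMap.hasFDerivAt _ |>.congr_of_eventuallyEq (.of_forall fun y => ?_)
    simp [mul_comm]
  have hinv := (hasDerivAt_inv hr).comp_hasFDerivAt x
    ((hasFDerivAt_sqrt_sq_add_sq hx).comp x hasFDerivAt_fst)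
  have hdir : (fun y => fderiv ℝ (etaExponent A) y v) =ᶠ[𝓝 x] fun y =>
      A ^ 2 * ⟪y.2, v.2⟫ - A * (y.1.1 * v.1.1 + y.1.2 * v.1.2) / √(y.1.1 ^ 2 + y.1.2 ^ 2) := by
    filter_upwards [(isOpen_ne_fun continuous_fst continuous_const).mem_nhds hx] with y hy
    exact fderiv_etaExponent_apply A hy v
  refine ((hinner.const_mul (A ^ 2)).sub ((hdot.mul hinv).const_mul A)).congr_of_eventuallyEq
    (hdir.mono fun y hy => ?_) |>.congr_fderiv (ContinuousLinearMap.ext fun w => ?_)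
  · simp [hy, div_eq_mul_inv, mul_assoc]
  · simp
    field_simp
    rw [real_inner_comm v.2 w.2]
    ring

end Exponent

section Frame

variable {G : Type*}

/-- The vector `c e₁ + a e₂ + z`, where `e₁ = p^⊥/|p|` and `e₂ = p/|p|` form an orthonormal frame
of `ℝ²` and `z` is the `q`-component. -/
noncomputable def frameVec (p : ℝ × ℝ) (c a : ℝ) (z : G) : (ℝ × ℝ) × G :=
  ((c * (-p.2 / √(p.1 ^ 2 + p.2 ^ 2)) + a * (p.1 / √(p.1 ^ 2 + p.2 ^ 2)),
    c * (p.1 / √(p.1 ^ 2 + p.2 ^ 2)) + a * (p.2 / √(p.1 ^ 2 + p.2 ^ 2))), z)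

theorem frameVec_vert (p : ℝ × ℝ) (z : G) : frameVec p 0 0 z = ((0, 0), z) := by
  simp [frameVec]

@[simp]
theorem frameVec_snd (p : ℝ × ℝ) (c a : ℝ) (z : G) : (frameVec p c a z).2 = z := rfl

section Zero

variable [Zero G] (p : ℝ × ℝ)

theorem frameVec_perp :
    frameVec p 1 0 (0 : G) = ((-p.2 / √(p.1 ^ 2 + p.2 ^ 2), p.1 / √(p.1 ^ 2 + p.2 ^ 2)), 0) := by
  simp [frameVec]

theorem frameVec_radial :
    frameVec p 0 1 (0 : G) = ((p.1 / √(p.1 ^ 2 + p.2 ^ 2), p.2 / √(p.1 ^ 2 + p.2 ^ 2)), 0) := by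
  simp [frameVec]

end Zero

theorem smul_frameVec_add_sum [AddCommGroup G] [Module ℝ G] {ι : Type*} [Fintype ι]
    (p : ℝ × ℝ) (a : ℝ) (b : ι → ℝ) (z : ι → G) :
    a • frameVec p 0 1 (0 : G) + ∑ i, b i • frameVec p 0 0 (z i) =
      frameVec p 0 a (∑ i, b i • z i) := by
  ext <;> simp [frameVec, Prod.fst_sum, Prod.snd_sum]

variable {p : ℝ × ℝ} (hp : p ≠ 0)
include hp

theorem dot_frameVec_fst (c a : ℝ) (z : G) :
    p.1 * (frameVec p c a z).1.1 + p.2 * (frameVec p c a z).1.2 = a * √(p.1 ^ 2 + p.2 ^ 2) := by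
  have hr := (sqrt_sq_add_sq_pos hp).ne'
  have hrr : √(p.1 ^ 2 + p.2 ^ 2) ^ 2 = p.1 ^ 2 + p.2 ^ 2 := Real.sq_sqrt (by positivity)
  simp only [frameVec]
  field_simp
  linear_combination (-a) * hrr

theorem frameVec_fst_dot_frameVec_fst (c a c' a' : ℝ) (z z' : G) :
    (frameVec p c a z).1.1 * (frameVec p c' a' z').1.1 +
      (frameVec p c a z).1.2 * (frameVec p c' a' z').1.2 = c * c' + a * a' := by
  have hr := (sqrt_sq_add_sq_pos hp).ne'
  have hrr : √(p.1 ^ 2 + p.2 ^ 2) ^ 2 = p.1 ^ 2 + p.2 ^ 2 := Real.sq_sqrt (by positivity)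
  simp only [frameVec]
  field_simp
  linear_combination (-(c * c' + a * a')) * hrr

end Frame

theorem one_half_le_sq_sub_add {t a s : ℝ} (ht : |t| ≤ 1 / 4) (has : a ^ 2 + s = 1)
    (hs : 0 ≤ s) : 1 / 2 ≤ (t - a) ^ 2 + s := by
  obtain ⟨ht₁, ht₂⟩ := abs_le.mp ht
  nlinarith [sq_nonneg (2 * t - a / 2)]

theorem inv_mul_le_div_two {lam ε A r : ℝ} (hlam : 0 < lam) (hε : 0 < ε)
    (hA : 8 / (lam * ε) ≤ A) (hr : ε / 4 ≤ r) : (A * r)⁻¹ ≤ lam / 2 := by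
  have hA₀ : 0 ≤ A := (by positivity : (0 : ℝ) ≤ 8 / (lam * ε)).trans hA
  rw [← inv_div]
  refine inv_anti₀ (by positivity) ?_
  calc 2 / lam = 8 / (lam * ε) * (ε / 4) := by field_simp; ring
    _ ≤ A * r := by gcongr

theorem norm_sum_smul_single_sq {ι : Type*} [Fintype ι] [DecidableEq ι] (b : ι → ℝ) :
    ‖∑ i, b i • EuclideanSpace.single i (1 : ℝ)‖ ^ 2 = ∑ i, b i ^ 2 := by
  rw [← real_inner_self_eq_norm_sq, EuclideanSpace.orthonormal_single.inner_sum]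
  simp [sq]

section FrameHessian

variable {G : Type*} [NormedAddCommGroup G] [InnerProductSpace ℝ G]

noncomputable def frameHessian (A r : ℝ) (q : G) (c a : ℝ) (z : G) (c' a' : ℝ) (z' : G) : ℝ :=
  (A * ⟪q, z⟫ - a) * (A * ⟪q, z'⟫ - a') + ⟪z, z'⟫ - c * c' / (A * r)

variable {A r : ℝ} {q : G}

@[simp]
theorem frameHessian_perp_perp : frameHessian A r q 1 0 0 1 0 0 = -(A * r)⁻¹ := by
  simp [frameHessian]

theorem abs_mul_inner_le_inv_sq (hA : 0 < A) (hq : ‖q‖ < (A ^ 3)⁻¹) {z : G} (hz : ‖z‖ ≤ 1) :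
    |A * ⟪q, z⟫| ≤ (A ^ 2)⁻¹ :=
  calc |A * ⟪q, z⟫| ≤ A * (‖q‖ * ‖z‖) := by
        rw [abs_mul, abs_of_pos hA]; gcongr; exact abs_real_inner_le_norm q z
    _ ≤ A * ((A ^ 3)⁻¹ * 1) := by gcongr
    _ = (A ^ 2)⁻¹ := by field_simp

theorem abs_frameHessian_radial_vert_le (hA : 0 < A) (hq : ‖q‖ < (A ^ 3)⁻¹) {z : G}
    (hz : ‖z‖ ≤ 1) : |frameHessian A r q 0 1 0 0 0 z| ≤ (A ^ 2)⁻¹ := by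
  simpa [frameHessian] using abs_mul_inner_le_inv_sq hA hq hz

theorem abs_frameHessian_vert_vert_sub_inner_le (hA : 1 ≤ A) (hq : ‖q‖ < (A ^ 3)⁻¹) {z z' : G}
    (hz : ‖z‖ ≤ 1) (hz' : ‖z'‖ ≤ 1) :
    |frameHessian A r q 0 0 z 0 0 z' - ⟪z, z'⟫| ≤ (A ^ 2)⁻¹ := by
  have hA₀ : 0 < A := by linarith
  have hA₁ : (A ^ 2)⁻¹ ≤ 1 := inv_le_one_of_one_le₀ (one_le_pow₀ hA)
  have h := abs_mul_inner_le_inv_sq hA₀ hq hz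
  have h' := abs_mul_inner_le_inv_sq hA₀ hq hz'
  simp only [frameHessian, sub_zero, mul_zero, zero_div, add_sub_cancel_right, abs_mul] at h h' ⊢
  calc _ ≤ (A ^ 2)⁻¹ * 1 := by gcongr; exact h'.trans hA₁
    _ = _ := mul_one _

theorem one_half_le_frameHessian_radial_vert (hA : 2 ≤ A) (hq : ‖q‖ < (A ^ 3)⁻¹) {a : ℝ} {z : G}
    (haz : a ^ 2 + ‖z‖ ^ 2 = 1) : 1 / 2 ≤ frameHessian A r q 0 a z 0 a z := by
  have hA₄ : (A ^ 2)⁻¹ ≤ 1 / 4 := by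
    rw [one_div]; exact inv_anti₀ (by norm_num) (by nlinarith)
  have hz : ‖z‖ ≤ 1 := by nlinarith [norm_nonneg z, sq_nonneg a]
  have h := one_half_le_sq_sub_add ((abs_mul_inner_le_inv_sq (by linarith) hq hz).trans hA₄)
    haz (by positivity)
  simpa [frameHessian, sq, real_inner_self_eq_norm_sq] using h

end FrameHessian

theorem normalized_D2_etaA_frameVec {m : ℕ} {A : ℝ} (hA : A ≠ 0) {p : ℝ × ℝ} (hp : p ≠ 0)
    (q : EuclideanSpace ℝ (Fin m)) (c a : ℝ) (z : EuclideanSpace ℝ (Fin m)) (c' a' : ℝ)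
    (z' : EuclideanSpace ℝ (Fin m)) :
    (A ^ 2 * etaA m A (p, q))⁻¹ * D2 m (etaA m A) (p, q) (frameVec p c a z) (frameVec p c' a' z') =
      frameHessian A √(p.1 ^ 2 + p.2 ^ 2) q c a z c' a' z' := by
  have hφ : ∀ᶠ y in 𝓝 ((p, q) : (ℝ × ℝ) × EuclideanSpace ℝ (Fin m)),
      DifferentiableAt ℝ (etaExponent A) y := by
    filter_upwards [(isOpen_ne_fun continuous_fst continuous_const).mem_nhds hp] with y hy
    exact (hasFDerivAt_etaExponent A hy).differentiableAt
  have hr := (sqrt_sq_add_sq_pos hp).ne'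
  rw [D2, show etaA m A = fun y => exp (etaExponent A y) from rfl, fderiv_fderiv_exp_comp_apply hφ
    (hasFDerivAt_fderiv_etaExponent_apply A hp _), fderiv_etaExponent_apply A hp,
    fderiv_etaExponent_apply A hp]
  simp only [add_apply, sub_apply, smul_apply, coe_comp, Function.comp_apply, coe_fst', coe_snd',
    innerSL_apply_apply, smul_eq_mul, dot_frameVec_fst hp, frameVec_fst_dot_frameVec_fst hp,
    frameVec_snd]
  have h := Real.exp_pos (etaExponent A (p, q))
  simp only [frameHessian]
  field_simp
  ring

/-- In coordinates adapted to `p`, `(A²η_A)⁻¹D²η_A = diag(-(A|p|)⁻¹, 1, ..., 1) + O(A⁻²)` on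
`{|q| < A⁻³, |p| ≥ ε₁/4}`; in particular for `A` large `D²η_A` has one negative eigenvalue
`γ₁` and the rest positive, with `γ₁ ≥ -λγ₂`. -/
theorem stmt9 (m : ℕ) (ε₁ lam : ℝ) (hε : 0 < ε₁) (hlam : 0 < lam) :
    ∃ A₀ C : ℝ, 0 < A₀ ∧ 0 < C ∧
      ∀ A : ℝ, A₀ ≤ A → ∀ (p : ℝ × ℝ) (q : EuclideanSpace ℝ (Fin m)),
        ‖q‖ < (A ^ 3)⁻¹ → ε₁ / 4 ≤ Real.sqrt (p.1 ^ 2 + p.2 ^ 2) →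
        let r := Real.sqrt (p.1 ^ 2 + p.2 ^ 2)
        let x : (ℝ × ℝ) × EuclideanSpace ℝ (Fin m) := (p, q)
        let e1 : (ℝ × ℝ) × EuclideanSpace ℝ (Fin m) := ((-p.2 / r, p.1 / r), 0)
        let e2 : (ℝ × ℝ) × EuclideanSpace ℝ (Fin m) := ((p.1 / r, p.2 / r), 0)
        let eqv : Fin m → (ℝ × ℝ) × EuclideanSpace ℝ (Fin m) :=
          fun i => ((0, 0), EuclideanSpace.single i 1)
        let B : (ℝ × ℝ) × EuclideanSpace ℝ (Fin m) →
            (ℝ × ℝ) × EuclideanSpace ℝ (Fin m) → ℝ :=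
          fun v w' => (A ^ 2 * etaA m A x)⁻¹ * D2 m (etaA m A) x v w'
        (|B e1 e1 - (-(A * r)⁻¹)| ≤ C / A ^ 2) ∧
        (|B e2 e2 - 1| ≤ C / A ^ 2) ∧
        (∀ i, |B (eqv i) (eqv i) - 1| ≤ C / A ^ 2) ∧
        (|B e1 e2| ≤ C / A ^ 2) ∧
        (∀ i, |B e1 (eqv i)| ≤ C / A ^ 2) ∧
        (∀ i, |B e2 (eqv i)| ≤ C / A ^ 2) ∧
        (∀ i j, i ≠ j → |B (eqv i) (eqv j)| ≤ C / A ^ 2) ∧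
        B e1 e1 < 0 ∧
        (∀ (a : ℝ) (b : Fin m → ℝ), a ^ 2 + ∑ i, b i ^ 2 = 1 →
          0 < B (a • e2 + ∑ i, b i • eqv i) (a • e2 + ∑ i, b i • eqv i) ∧
          -lam * B (a • e2 + ∑ i, b i • eqv i) (a • e2 + ∑ i, b i • eqv i) ≤ B e1 e1) := by
  refine ⟨2 + 8 / (lam * ε₁), 1, by positivity, one_pos, fun A hA p q hq hr => ?_⟩
  have h₈ : 0 < 8 / (lam * ε₁) := by positivity
  have hA₂ : 2 ≤ A := by linarith
  have hp : p ≠ 0 := fun h => by simp [h] at hr; linarith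
  have hr₀ := sqrt_sq_add_sq_pos hp
  have hAr := inv_mul_le_div_two (A := A) hlam hε (by linarith) hr
  have hon := EuclideanSpace.orthonormal_single (𝕜 := ℝ) (ι := Fin m)
  have hs : ∀ i : Fin m, ‖EuclideanSpace.single i (1 : ℝ)‖ ≤ 1 := fun i => (hon.1 i).le
  have hB := normalized_D2_etaA_frameVec (by positivity : A ≠ 0) hp q
  intro r x e1 e2 eqv B
  simp only [B, x, e1, e2, eqv, r, ← frameVec_perp, ← frameVec_radial, ← frameVec_vert p,
    smul_frameVec_add_sum, hB, frameHessian_perp_perp, one_div]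
  refine ⟨by simp; positivity, by simp [frameHessian]; positivity, fun i => ?_,
    by simp [frameHessian]; positivity, fun i => by simp [frameHessian]; positivity,
    fun i => abs_frameHessian_radial_vert_le (by positivity) hq (hs i), fun i j hij => ?_,
    by simp; positivity, fun a b hab => ?_⟩
  · simpa [real_inner_self_eq_norm_sq, hon.1 i] using
      abs_frameHessian_vert_vert_sub_inner_le (by linarith) hq (hs i) (hs i)
  · simpa [hon.2 hij] using abs_frameHessian_vert_vert_sub_inner_le (by linarith) hq (hs i) (hs j)
  · have h := one_half_le_frameHessian_radial_vert (r := √(p.1 ^ 2 + p.2 ^ 2)) hA₂ hq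
      (norm_sum_smul_single_sq b ▸ hab)
    constructor <;> nlinarith
end

section
/- Let G₀ be defined near a smooth curve Σ₀ ⊂ ℝ² by G₀(x) = g(π(x)) + v(π(x))·(x - π(x)) + A(π(x))·d(x)², where π is the nearest-point projection to Σ₀, d is the distance to Σ₀, g, v satisfy the separation condition g(p̃) - g(p) - v(p)·(p̃-p) ≥ γ|p̃-p|² on Σ₀, and A is a smooth positive function. Then G₀ = g and ∇G₀ = v on Σ₀, and for A sufficiently large (pointwise, depending on γ, g, v and the curvature of Σ₀) one has D²G₀ ≥ (3γ/2)I on Σ₀. -/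
/-!
At a point `p = π p` of `Σ₀` the normal offset `r x = x - π x` vanishes, so `G₀ p = g p`, and
`DG₀(p) w = ⟪v p, Dπ w⟫ + ⟪v p, w - Dπ w⟫ = ⟪v p, w⟫` by the tangency hypothesis.

For the Hessian write `P = Dπ(p) w`. The separation condition says exactly that
`g ∘ π - ⟪v p, π - p⟫ - γ ‖π - p‖²` has a local minimum at `p`, so its second derivative along `w`
is nonnegative: `D²(g ∘ π)[w,w] ≥ ⟪v p, D²π[w,w]⟫ + 2γ‖P‖²`. The curvature term `⟪v p, D²π[w,w]⟫`
cancels against the one coming from `⟪v ∘ π, r⟫`, leaving at least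
`2γ‖P‖² - 2‖Dv p‖ ‖P‖ ‖w - P‖ + 2A(p) ‖w - P‖²`, which dominates `(3γ/2)‖w‖²` as soon as
`A(p) ≥ (‖Dv p‖ + 2γ)² / γ`. A smooth such `A` comes from bounding `‖Dv‖` by a sum over an
orthonormal basis.
-/

/-- second derivative of `f` at `x` as a quadratic form evaluated at `w`. -/
noncomputable def D2r (f : EuclideanSpace ℝ (Fin 2) → ℝ)
    (x w : EuclideanSpace ℝ (Fin 2)) : ℝ :=
  fderiv ℝ (fun y => fderiv ℝ f y w) x w

open Filter Topology
open scoped RealInnerProductSpace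

section SecondDirDeriv

variable (𝕜 : Type*) [NontriviallyNormedField 𝕜]
  {E F G H : Type*} [NormedAddCommGroup E] [NormedSpace 𝕜 E] [NormedAddCommGroup F]
  [NormedSpace 𝕜 F] [NormedAddCommGroup G] [NormedSpace 𝕜 G] [NormedAddCommGroup H]
  [NormedSpace 𝕜 H]

noncomputable def secondDirDeriv (f : E → F) (x w : E) : F :=
  fderiv 𝕜 (fun y => fderiv 𝕜 f y w) x w

variable {𝕜} {f : E → F} {g : E → G} {x : E}

theorem ContDiffAt.eventually_differentiableAt (hf : ContDiffAt 𝕜 2 f x) :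
    ∀ᶠ y in 𝓝 x, DifferentiableAt 𝕜 f y :=
  (hf.eventually (by simp)).mono fun _ hy => hy.differentiableAt (by simp)

theorem ContDiffAt.differentiableAt_fderiv_apply (hf : ContDiffAt 𝕜 2 f x) (w : E) :
    DifferentiableAt 𝕜 (fun y => fderiv 𝕜 f y w) x :=
  ((hf.fderiv_right (m := 1) le_rfl).clm_apply contDiffAt_const).differentiableAt one_ne_zero

theorem secondDirDeriv_const (c : F) (x w : E) : secondDirDeriv 𝕜 (fun _ => c) x w = 0 := by
  simp [secondDirDeriv]

theorem secondDirDeriv_id (x w : E) : secondDirDeriv 𝕜 (fun y => y) x w = 0 := by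
  simp [secondDirDeriv]

theorem secondDirDeriv_add {f g : E → F} (hf : ContDiffAt 𝕜 2 f x) (hg : ContDiffAt 𝕜 2 g x)
    (w : E) : secondDirDeriv 𝕜 (fun y => f y + g y) x w =
      secondDirDeriv 𝕜 f x w + secondDirDeriv 𝕜 g x w := by
  have h : (fun y => fderiv 𝕜 (fun y => f y + g y) y w) =ᶠ[𝓝 x]
      fun y => fderiv 𝕜 f y w + fderiv 𝕜 g y w := by
    filter_upwards [hf.eventually_differentiableAt, hg.eventually_differentiableAt] with y hfy hgy
    rw [fderiv_fun_add hfy hgy, add_apply]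
  rw [secondDirDeriv, h.fderiv_eq, fderiv_fun_add (hf.differentiableAt_fderiv_apply w)
    (hg.differentiableAt_fderiv_apply w), add_apply]
  rfl

theorem secondDirDeriv_sub {f g : E → F} (hf : ContDiffAt 𝕜 2 f x) (hg : ContDiffAt 𝕜 2 g x)
    (w : E) : secondDirDeriv 𝕜 (fun y => f y - g y) x w =
      secondDirDeriv 𝕜 f x w - secondDirDeriv 𝕜 g x w := by
  have h : (fun y => fderiv 𝕜 (fun y => f y - g y) y w) =ᶠ[𝓝 x]
      fun y => fderiv 𝕜 f y w - fderiv 𝕜 g y w := by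
    filter_upwards [hf.eventually_differentiableAt, hg.eventually_differentiableAt] with y hfy hgy
    rw [fderiv_fun_sub hfy hgy, sub_apply]
  rw [secondDirDeriv, h.fderiv_eq, fderiv_fun_sub (hf.differentiableAt_fderiv_apply w)
    (hg.differentiableAt_fderiv_apply w), sub_apply]
  rfl

theorem secondDirDeriv_bilinear (B : F →L[𝕜] G →L[𝕜] H) (hf : ContDiffAt 𝕜 2 f x)
    (hg : ContDiffAt 𝕜 2 g x) (w : E) :
    secondDirDeriv 𝕜 (fun y => B (f y) (g y)) x w = B (secondDirDeriv 𝕜 f x w) (g x) +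
      (2 : 𝕜) • B (fderiv 𝕜 f x w) (fderiv 𝕜 g x w) + B (f x) (secondDirDeriv 𝕜 g x w) := by
  have h : (fun y => fderiv 𝕜 (fun y => B (f y) (g y)) y w) =ᶠ[𝓝 x]
      fun y => B (f y) (fderiv 𝕜 g y w) + B (fderiv 𝕜 f y w) (g y) := by
    filter_upwards [hf.eventually_differentiableAt, hg.eventually_differentiableAt] with y hfy hgy
    rw [B.fderiv_of_bilinear hfy hgy]
    rfl
  have hf' := hf.differentiableAt_fderiv_apply w
  have hg' := hg.differentiableAt_fderiv_apply w
  have hf1 := hf.differentiableAt two_ne_zero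
  have hg1 := hg.differentiableAt two_ne_zero
  rw [secondDirDeriv, h.fderiv_eq, ((B.hasFDerivAt_of_bilinear hf1.hasFDerivAt
    hg'.hasFDerivAt).fun_add (B.hasFDerivAt_of_bilinear hf'.hasFDerivAt hg1.hasFDerivAt)).fderiv]
  simp only [ContinuousLinearMap.precompR_apply, ContinuousLinearMap.compL_apply, add_apply,
    ContinuousLinearMap.comp_apply, ContinuousLinearMap.precompL_apply, secondDirDeriv, two_smul]
  abel

theorem secondDirDeriv_mul {f g : E → 𝕜} (hf : ContDiffAt 𝕜 2 f x) (hg : ContDiffAt 𝕜 2 g x)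
    (w : E) : secondDirDeriv 𝕜 (fun y => f y * g y) x w = secondDirDeriv 𝕜 f x w * g x +
      2 * (fderiv 𝕜 f x w * fderiv 𝕜 g x w) + f x * secondDirDeriv 𝕜 g x w := by
  simpa using secondDirDeriv_bilinear (ContinuousLinearMap.mul 𝕜 𝕜) hf hg w

end SecondDirDeriv

theorem IsLocalMin.nonneg_of_hasDerivAt_of_hasDerivAt {f f' : ℝ → ℝ} {x₀ c : ℝ}
    (hmin : IsLocalMin f x₀) (hf : ∀ᶠ t in 𝓝 x₀, HasDerivAt f (f' t) t)
    (hf' : HasDerivAt f' c x₀) : 0 ≤ c := by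
  by_contra! hc
  -- Tilting by `-c/4 (t - x₀)²` keeps the second derivative negative, so `x₀` becomes a local
  -- maximum of `χ` as well as a local minimum of `f`; that forces `(t - x₀)² ≤ 0` near `x₀`.
  set χ : ℝ → ℝ := fun t => f t - c / 4 * (t - x₀) ^ 2
  have hχ : ∀ᶠ t in 𝓝 x₀, HasDerivAt χ (f' t - c / 2 * (t - x₀)) t := by
    filter_upwards [hf] with t ht
    exact (ht.sub ((((hasDerivAt_id' t).sub_const x₀).pow 2).const_mul (c / 4))).congr_deriv
      (by ring)
  have hχ' : deriv χ =ᶠ[𝓝 x₀] fun t => f' t - c / 2 * (t - x₀) :=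
    hχ.mono fun _ ht => ht.deriv
  have hχ'' : HasDerivAt (fun t => f' t - c / 2 * (t - x₀)) (c - c / 2) x₀ :=
    (hf'.sub (((hasDerivAt_id' x₀).sub_const x₀).const_mul (c / 2))).congr_deriv (by ring)
  have hmax : IsLocalMax χ x₀ := by
    refine isLocalMax_of_deriv_deriv_neg ?_ ?_ hχ.self_of_nhds.continuousAt
    · rw [hχ'.deriv_eq, hχ''.deriv]; linarith
    · rw [hχ'.eq_of_nhds, hmin.hasDerivAt_eq_zero hf.self_of_nhds]; simp
  have hboth : ∀ᶠ t in 𝓝[≠] x₀, (f x₀ ≤ f t ∧ χ t ≤ χ x₀) ∧ t ≠ x₀ :=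
    ((hmin.and hmax).filter_mono nhdsWithin_le_nhds).and self_mem_nhdsWithin
  obtain ⟨t, ⟨hmin_t, hmax_t⟩, ht⟩ := hboth.exists
  have : 0 < (t - x₀) ^ 2 := by
    have : t - x₀ ≠ 0 := sub_ne_zero.mpr ht
    positivity
  simp only [χ] at hmax_t
  nlinarith

section InnerProductSpace

variable {E F : Type*} [NormedAddCommGroup E] [NormedSpace ℝ E] [NormedAddCommGroup F]
  [InnerProductSpace ℝ F] {f g : E → F} {x : E}

theorem secondDirDeriv_inner (hf : ContDiffAt ℝ 2 f x) (hg : ContDiffAt ℝ 2 g x) (w : E) :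
    secondDirDeriv ℝ (fun y => ⟪f y, g y⟫) x w = ⟪secondDirDeriv ℝ f x w, g x⟫ +
      2 * ⟪fderiv ℝ f x w, fderiv ℝ g x w⟫ + ⟪f x, secondDirDeriv ℝ g x w⟫ :=
  secondDirDeriv_bilinear (innerSL ℝ) hf hg w

theorem fderiv_norm_sq_of_eq_zero (hf : DifferentiableAt ℝ f x) (hx : f x = 0) :
    fderiv ℝ (fun y => ‖f y‖ ^ 2) x = 0 := by
  simp [hf.hasFDerivAt.norm_sq.fderiv, hx]

theorem secondDirDeriv_norm_sq_of_eq_zero (hf : ContDiffAt ℝ 2 f x) (hx : f x = 0) (w : E) :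
    secondDirDeriv ℝ (fun y => ‖f y‖ ^ 2) x w = 2 * ‖fderiv ℝ f x w‖ ^ 2 := by
  simp_rw [← real_inner_self_eq_norm_sq]
  rw [secondDirDeriv_inner hf hf]
  simp [hx]

theorem secondDirDeriv_nonneg_of_isLocalMin {f : E → ℝ} (hf : ContDiffAt ℝ 2 f x)
    (hmin : IsLocalMin f x) (w : E) : 0 ≤ secondDirDeriv ℝ f x w := by
  have hline : ∀ t : ℝ, HasDerivAt (fun t : ℝ => x + t • w) w t := fun t => by
    simpa using ((hasDerivAt_id t).smul_const w).const_add x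
  have hline0 : Tendsto (fun t : ℝ => x + t • w) (𝓝 0) (𝓝 x) := by
    simpa using (hline 0).continuousAt.tendsto
  have hmin' : IsLocalMin (f ∘ fun t : ℝ => x + t • w) 0 :=
    IsLocalMin.comp_continuous (by simpa using hmin) (hline 0).continuousAt
  refine hmin'.nonneg_of_hasDerivAt_of_hasDerivAt (f' := fun t => fderiv ℝ f (x + t • w) w) ?_ ?_
  · filter_upwards [hline0.eventually hf.eventually_differentiableAt] with t ht
    exact ht.hasFDerivAt.comp_hasDerivAt t (hline t)
  · exact (hf.differentiableAt_fderiv_apply w).hasFDerivAt.comp_hasDerivAt_of_eq 0 (hline 0)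
      (by simp)

end InnerProductSpace

theorem three_halves_mul_add_sq_le {γ m a b A : ℝ} (hγ : 0 < γ) (hm : 0 ≤ m)
    (hA : (m + 2 * γ) ^ 2 / γ ≤ A) :
    3 * γ / 2 * (a + b) ^ 2 ≤ 2 * γ * a ^ 2 - 2 * m * a * b + 2 * A * b ^ 2 := by
  rw [div_le_iff₀ hγ] at hA
  -- `γ (rhs - lhs) = (γa - (2m + 3γ)b)² / 2 + 2γ(m + γ)b² + 2(Aγ - (m + 2γ)²)b²`
  refine le_of_mul_le_mul_left ?_ hγ
  nlinarith [sq_nonneg (γ * a - (2 * m + 3 * γ) * b),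
    mul_nonneg (mul_nonneg hm hγ.le) (sq_nonneg b), mul_nonneg (sub_nonneg.2 hA) (sq_nonneg b),
    mul_nonneg hγ.le (sq_nonneg b)]

theorem OrthonormalBasis.opNorm_le_sum_norm_apply {ι E F : Type*} [Fintype ι]
    [NormedAddCommGroup E] [InnerProductSpace ℝ E] [NormedAddCommGroup F] [NormedSpace ℝ F]
    (b : OrthonormalBasis ι ℝ E) (T : E →L[ℝ] F) : ‖T‖ ≤ ∑ i, ‖T (b i)‖ := by
  refine T.opNorm_le_bound (Finset.sum_nonneg fun _ _ => norm_nonneg _) fun u => ?_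
  calc ‖T u‖ = ‖∑ i, ⟪b i, u⟫ • T (b i)‖ := by
        simp_rw [← map_smul, ← map_sum, b.sum_repr' u]
    _ ≤ ∑ i, ‖u‖ * ‖T (b i)‖ := by
        refine (norm_sum_le _ _).trans (Finset.sum_le_sum fun i _ => ?_)
        rw [norm_smul]
        gcongr
        simpa using norm_inner_le_norm (𝕜 := ℝ) (b i) u
    _ = (∑ i, ‖T (b i)‖) * ‖u‖ := by rw [Finset.sum_mul]; simp_rw [mul_comm]

theorem exists_contDiffOn_forall_opNorm_fderiv_le {E F : Type*} [NormedAddCommGroup E]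
    [InnerProductSpace ℝ E] [FiniteDimensional ℝ E] [NormedAddCommGroup F]
    [InnerProductSpace ℝ F] {U : Set E} {v : E → F} {m n : WithTop ℕ∞} (hU : IsOpen U)
    (hv : ContDiffOn ℝ n v U) (hmn : m + 1 ≤ n) :
    ∃ M : E → ℝ, ContDiffOn ℝ m M U ∧ ∀ x ∈ U, ‖fderiv ℝ v x‖ ≤ M x := by
  let b := stdOrthonormalBasis ℝ E
  -- `1 + t²` rather than `t`, since the norm is not smooth at `0`.
  refine ⟨fun x => ∑ i, (1 + ‖fderiv ℝ v x (b i)‖ ^ 2), ?_, fun x _ => ?_⟩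
  · exact ContDiffOn.sum fun i _ => contDiffOn_const.add
      (((hv.fderiv_of_isOpen hU hmn).clm_apply contDiffOn_const).norm_sq ℝ)
  · refine (b.opNorm_le_sum_norm_apply _).trans (Finset.sum_le_sum fun i _ => ?_)
    nlinarith [sq_nonneg (‖fderiv ℝ v x (b i)‖ - 1)]

section SecondOrderExtension

variable {E : Type*} [NormedAddCommGroup E] [InnerProductSpace ℝ E] {proj v : E → E}
  {g A : E → ℝ} {p : E}

def secondOrderExtension (proj : E → E) (g : E → ℝ) (v : E → E) (A : E → ℝ) (x : E) : ℝ :=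
  g (proj x) + ⟪v (proj x), x - proj x⟫ + A (proj x) * ‖x - proj x‖ ^ 2

theorem secondOrderExtension_of_proj_eq (hp : proj p = p) :
    secondOrderExtension proj g v A p = g p := by
  simp [secondOrderExtension, hp]

theorem fderiv_secondOrderExtension_apply (hp : proj p = p) (hproj : DifferentiableAt ℝ proj p)
    (hg : DifferentiableAt ℝ g p) (hv : DifferentiableAt ℝ v p) (hA : DifferentiableAt ℝ A p)
    (w : E) (htan : fderiv ℝ (fun x => g (proj x)) p w = ⟪v p, fderiv ℝ proj p w⟫) :
    fderiv ℝ (secondOrderExtension proj g v A) p w = ⟪v p, w⟫ := by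
  rw [← hp] at hg hv hA
  have hr : DifferentiableAt ℝ (fun x => x - proj x) p := differentiableAt_fun_id.sub hproj
  have hr0 : p - proj p = 0 := by rw [hp, sub_self]
  have hgπ : DifferentiableAt ℝ (fun x => g (proj x)) p := hg.comp p hproj
  have hvπ : DifferentiableAt ℝ (fun x => v (proj x)) p := hv.comp p hproj
  have hAπ : DifferentiableAt ℝ (fun x => A (proj x)) p := hA.comp p hproj
  have hnorm := hr.norm_sq ℝ
  unfold secondOrderExtension
  rw [fderiv_fun_add (hgπ.fun_add (hvπ.inner ℝ hr)) (hAπ.fun_mul hnorm),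
    fderiv_fun_add hgπ (hvπ.inner ℝ hr), fderiv_fun_mul hAπ hnorm, fderiv_norm_sq_of_eq_zero hr hr0]
  simp only [add_apply, fderiv_inner_apply ℝ hvπ hr, htan,
    fderiv_fun_sub differentiableAt_fun_id hproj, hp]
  simp [inner_sub_right]

theorem secondDirDeriv_secondOrderExtension (hp : proj p = p) (hproj : ContDiffAt ℝ 2 proj p)
    (hg : ContDiffAt ℝ 2 g p) (hv : ContDiffAt ℝ 2 v p) (hA : ContDiffAt ℝ 2 A p) (w : E) :
    secondDirDeriv ℝ (secondOrderExtension proj g v A) p w =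
      secondDirDeriv ℝ (fun x => g (proj x)) p w
        + 2 * ⟪fderiv ℝ v p (fderiv ℝ proj p w), w - fderiv ℝ proj p w⟫
        - ⟪v p, secondDirDeriv ℝ proj p w⟫ + 2 * A p * ‖w - fderiv ℝ proj p w‖ ^ 2 := by
  rw [← hp] at hg hv hA
  have hr : ContDiffAt ℝ 2 (fun x => x - proj x) p := contDiffAt_fun_id.sub hproj
  have hr0 : p - proj p = 0 := by rw [hp, sub_self]
  have hgπ : ContDiffAt ℝ 2 (fun x => g (proj x)) p := hg.comp p hproj
  have hvπ : ContDiffAt ℝ 2 (fun x => v (proj x)) p := hv.comp p hproj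
  have hAπ : ContDiffAt ℝ 2 (fun x => A (proj x)) p := hA.comp p hproj
  have hDr : fderiv ℝ (fun x => x - proj x) p w = w - fderiv ℝ proj p w := by
    rw [fderiv_fun_sub differentiableAt_fun_id (hproj.differentiableAt two_ne_zero)]
    simp
  have hD2r : secondDirDeriv ℝ (fun x => x - proj x) p w = -secondDirDeriv ℝ proj p w := by
    rw [secondDirDeriv_sub contDiffAt_fun_id hproj, secondDirDeriv_id, zero_sub]
  have hDvπ : fderiv ℝ (fun x => v (proj x)) p w = fderiv ℝ v p (fderiv ℝ proj p w) := by
    rw [fderiv_fun_comp p (hv.differentiableAt two_ne_zero) (hproj.differentiableAt two_ne_zero),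
      hp]
    rfl
  unfold secondOrderExtension
  rw [secondDirDeriv_add (hgπ.add (hvπ.inner ℝ hr)) (hAπ.mul (hr.norm_sq ℝ)),
    secondDirDeriv_add hgπ (hvπ.inner ℝ hr), secondDirDeriv_inner hvπ hr,
    secondDirDeriv_mul hAπ (hr.norm_sq ℝ), secondDirDeriv_norm_sq_of_eq_zero hr hr0,
    fderiv_norm_sq_of_eq_zero (hr.differentiableAt two_ne_zero) hr0, hr0, hD2r, hDr, hDvπ, hp]
  simp only [inner_zero_right, zero_add, inner_neg_right, norm_zero, ne_eq, OfNat.ofNat_ne_zero,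
    not_false_eq_true, zero_pow, mul_zero, zero_apply, add_zero]
  ring

theorem le_secondDirDeriv_comp_of_isLocalMin {γ : ℝ} (a : E) (hp : proj p = p)
    (hproj : ContDiffAt ℝ 2 proj p) (hg : ContDiffAt ℝ 2 g p)
    (hsep : ∀ᶠ y in 𝓝 p, γ * ‖proj y - p‖ ^ 2 ≤ g (proj y) - g p - ⟪a, proj y - p⟫) (w : E) :
    ⟪a, secondDirDeriv ℝ proj p w⟫ + 2 * γ * ‖fderiv ℝ proj p w‖ ^ 2 ≤
      secondDirDeriv ℝ (fun x => g (proj x)) p w := by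
  rw [← hp] at hg
  have hgπ : ContDiffAt ℝ 2 (fun x => g (proj x)) p := hg.comp p hproj
  have hq : ContDiffAt ℝ 2 (fun y => proj y - p) p := hproj.sub contDiffAt_const
  have hR : ContDiffAt ℝ 2 (fun y => g (proj y) - ⟪a, proj y⟫ - γ * ‖proj y - p‖ ^ 2) p :=
    (hgπ.sub (contDiffAt_const.inner ℝ hproj)).sub (contDiffAt_const.mul (hq.norm_sq ℝ))
  have hmin : IsLocalMin (fun y => g (proj y) - ⟪a, proj y⟫ - γ * ‖proj y - p‖ ^ 2) p := by
    filter_upwards [hsep] with y hy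
    simp only [hp, sub_self, norm_zero, inner_sub_right] at hy ⊢
    linarith
  have := secondDirDeriv_nonneg_of_isLocalMin hR hmin w
  rw [secondDirDeriv_sub (hgπ.sub (contDiffAt_const.inner ℝ hproj))
      (contDiffAt_const.mul (hq.norm_sq ℝ)),
    secondDirDeriv_sub hgπ (contDiffAt_const.inner ℝ hproj),
    secondDirDeriv_inner contDiffAt_const hproj, secondDirDeriv_mul contDiffAt_const (hq.norm_sq ℝ),
    secondDirDeriv_norm_sq_of_eq_zero hq (by rw [hp, sub_self]), fderiv_sub_const] at this
  simp only [secondDirDeriv_const, inner_zero_left, fderiv_fun_const, Pi.zero_apply, zero_apply,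
    mul_zero, add_zero, zero_add, zero_mul, sub_nonneg] at this
  linarith

theorem le_secondDirDeriv_secondOrderExtension {γ : ℝ} (hγ : 0 < γ) (hp : proj p = p)
    (hproj : ContDiffAt ℝ 2 proj p) (hg : ContDiffAt ℝ 2 g p) (hv : ContDiffAt ℝ 2 v p)
    (hA : ContDiffAt ℝ 2 A p)
    (hsep : ∀ᶠ y in 𝓝 p, γ * ‖proj y - p‖ ^ 2 ≤ g (proj y) - g p - ⟪v p, proj y - p⟫)
    (hAp : (‖fderiv ℝ v p‖ + 2 * γ) ^ 2 / γ ≤ A p) (w : E) :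
    3 * γ / 2 * ‖w‖ ^ 2 ≤ secondDirDeriv ℝ (secondOrderExtension proj g v A) p w := by
  rw [secondDirDeriv_secondOrderExtension hp hproj hg hv hA]
  have hcomp := le_secondDirDeriv_comp_of_isLocalMin (v p) hp hproj hg hsep w
  set P := fderiv ℝ proj p w
  have hcross : -(‖fderiv ℝ v p‖ * ‖P‖ * ‖w - P‖) ≤ ⟪fderiv ℝ v p P, w - P⟫ :=
    calc -(‖fderiv ℝ v p‖ * ‖P‖ * ‖w - P‖) ≤ -(‖fderiv ℝ v p P‖ * ‖w - P‖) := by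
          gcongr; exact (fderiv ℝ v p).le_opNorm P
      _ ≤ ⟪fderiv ℝ v p P, w - P⟫ := neg_le_of_abs_le (abs_real_inner_le_norm _ _)
  have hw : ‖w‖ ^ 2 ≤ (‖P‖ + ‖w - P‖) ^ 2 := by
    gcongr; exact norm_le_norm_add_norm_sub' w P
  have hquad := three_halves_mul_add_sq_le (a := ‖P‖) (b := ‖w - P‖) hγ (norm_nonneg _) hAp
  nlinarith

end SecondOrderExtension

theorem stmt15_general (S U : Set (EuclideanSpace ℝ (Fin 2))) (hU : IsOpen U) (hSU : S ⊆ U)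
    (proj : EuclideanSpace ℝ (Fin 2) → EuclideanSpace ℝ (Fin 2))
    (g : EuclideanSpace ℝ (Fin 2) → ℝ)
    (v : EuclideanSpace ℝ (Fin 2) → EuclideanSpace ℝ (Fin 2))
    (γ : ℝ) (hγ : 0 < γ)
    (hproj : ContDiffOn ℝ (⊤ : ℕ∞) proj U) (hprojmem : ∀ x ∈ U, proj x ∈ S)
    (hprojid : ∀ p ∈ S, proj p = p)
    (hg : ContDiffOn ℝ (⊤ : ℕ∞) g U) (hv : ContDiffOn ℝ (⊤ : ℕ∞) v U)
    (hsep : ∀ p ∈ S, ∀ q ∈ S, g q - g p - (inner ℝ (v p) (q - p) : ℝ) ≥ γ * ‖q - p‖ ^ 2)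
    (htan : ∀ p ∈ S, ∀ w, fderiv ℝ (fun x => g (proj x)) p w =
      (inner ℝ (v p) (fderiv ℝ proj p w) : ℝ)) :
    ∃ A : EuclideanSpace ℝ (Fin 2) → ℝ, ContDiffOn ℝ (⊤ : ℕ∞) A U ∧ (∀ x ∈ U, 0 < A x) ∧
      ∀ p ∈ S,
        (g (proj p) + (inner ℝ (v (proj p)) (p - proj p) : ℝ) +
            A (proj p) * ‖p - proj p‖ ^ 2 = g p) ∧
        (∀ w, fderiv ℝ (fun x => g (proj x) + (inner ℝ (v (proj x)) (x - proj x) : ℝ) +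
            A (proj x) * ‖x - proj x‖ ^ 2) p w = (inner ℝ (v p) w : ℝ)) ∧
        (∀ w, 3 * γ / 2 * ‖w‖ ^ 2 ≤
          D2r (fun x => g (proj x) + (inner ℝ (v (proj x)) (x - proj x) : ℝ) +
            A (proj x) * ‖x - proj x‖ ^ 2) p w) := by
  obtain ⟨M, hM, hMv⟩ :=
    exists_contDiffOn_forall_opNorm_fderiv_le (m := (⊤ : ℕ∞)) hU hv (by simp)
  set A := fun x => (M x + 2 * γ) ^ 2 / γ
  have hA : ContDiffOn ℝ (⊤ : ℕ∞) A U := ((hM.add contDiffOn_const).pow 2).div_const γ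
  refine ⟨A, hA, fun x hx => ?_, fun p hp => ?_⟩
  · have := (norm_nonneg _).trans (hMv x hx)
    positivity
  have hpp := hprojid p hp
  have hnhds : U ∈ 𝓝 p := hU.mem_nhds (hSU hp)
  have hC2 : ∀ {F : Type} [NormedAddCommGroup F] [NormedSpace ℝ F]
      {f : EuclideanSpace ℝ (Fin 2) → F}, ContDiffOn ℝ (⊤ : ℕ∞) f U → ContDiffAt ℝ 2 f p :=
    fun hf => (hf.contDiffAt hnhds).of_le (WithTop.coe_le_coe.mpr le_top)
  have hsep' : ∀ᶠ y in 𝓝 p, γ * ‖proj y - p‖ ^ 2 ≤ g (proj y) - g p - ⟪v p, proj y - p⟫ := by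
    filter_upwards [hnhds] with y hy using hsep p hp (proj y) (hprojmem y hy)
  have hAp : (‖fderiv ℝ v p‖ + 2 * γ) ^ 2 / γ ≤ (M p + 2 * γ) ^ 2 / γ := by
    gcongr
    exact hMv p (hSU hp)
  refine ⟨secondOrderExtension_of_proj_eq hpp, fun w => ?_, fun w => ?_⟩
  · exact fderiv_secondOrderExtension_apply hpp ((hC2 hproj).differentiableAt two_ne_zero)
      ((hC2 hg).differentiableAt two_ne_zero) ((hC2 hv).differentiableAt two_ne_zero)
      ((hC2 hA).differentiableAt two_ne_zero) w (htan p hp w)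
  · exact le_secondDirDeriv_secondOrderExtension hγ hpp (hC2 hproj) (hC2 hg) (hC2 hv) (hC2 hA)
      hsep' hAp w

/-- Local extension lemma: with `G₀(x) = g(π(x)) + v(π(x))·(x - π(x)) + A(π(x))d(x)²`,
one has `G₀ = g`, `∇G₀ = v` on `Σ₀`, and `D²G₀ ≥ (3γ/2)I` on `Σ₀` for a suitable smooth
positive `A`. -/
theorem stmt15 (S U : Set (EuclideanSpace ℝ (Fin 2))) (hU : IsOpen U) (hSU : S ⊆ U)
    (proj nu : EuclideanSpace ℝ (Fin 2) → EuclideanSpace ℝ (Fin 2))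
    (g : EuclideanSpace ℝ (Fin 2) → ℝ)
    (v : EuclideanSpace ℝ (Fin 2) → EuclideanSpace ℝ (Fin 2))
    (γ : ℝ) (hγ : 0 < γ)
    (hproj : ContDiffOn ℝ (⊤ : ℕ∞) proj U) (hprojmem : ∀ x ∈ U, proj x ∈ S)
    (hprojid : ∀ p ∈ S, proj p = p)
    (hdist : ∀ x ∈ U, ‖x - proj x‖ = Metric.infDist x S)
    (hnu : ∀ p ∈ S, ‖nu p‖ = 1)
    (hhess : ∀ p ∈ S, ∀ w, D2r (fun z => ‖z - proj z‖ ^ 2 / 2) p w =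
      (inner ℝ w (nu p) : ℝ) ^ 2)
    (hg : ContDiffOn ℝ (⊤ : ℕ∞) g U) (hv : ContDiffOn ℝ (⊤ : ℕ∞) v U)
    (hsep : ∀ p ∈ S, ∀ q ∈ S, g q - g p - (inner ℝ (v p) (q - p) : ℝ) ≥ γ * ‖q - p‖ ^ 2)
    (htan : ∀ p ∈ S, ∀ w, fderiv ℝ (fun x => g (proj x)) p w =
      (inner ℝ (v p) (fderiv ℝ proj p w) : ℝ)) :
    ∃ A : EuclideanSpace ℝ (Fin 2) → ℝ, ContDiffOn ℝ (⊤ : ℕ∞) A U ∧ (∀ x ∈ U, 0 < A x) ∧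
      ∀ p ∈ S,
        (g (proj p) + (inner ℝ (v (proj p)) (p - proj p) : ℝ) +
            A (proj p) * ‖p - proj p‖ ^ 2 = g p) ∧
        (∀ w, fderiv ℝ (fun x => g (proj x) + (inner ℝ (v (proj x)) (x - proj x) : ℝ) +
            A (proj x) * ‖x - proj x‖ ^ 2) p w = (inner ℝ (v p) w : ℝ)) ∧
        (∀ w, 3 * γ / 2 * ‖w‖ ^ 2 ≤
          D2r (fun x => g (proj x) + (inner ℝ (v (proj x)) (x - proj x) : ℝ) +
            A (proj x) * ‖x - proj x‖ ^ 2) p w) :=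
  stmt15_general S U hU hSU proj g v γ hγ hproj hprojmem hprojid hg hv hsep htan
end

section
/- In the one-dimensional construction: suppose η ∈ C([0,1]) is concave, decreasing on [1-δ,1], equals 1+μ on [0,1-δ], and satisfies η(s) ≥ min{1, (1/2)(1 + δ^{-1/2}(1-s)^{1/2})} and η(1) = 1/2. Then for 0 ≤ x ≤ 1-δ and any y, the quantity H(x,y) = ∫ₓ^y (η-1/2)dμ_y - (1/(1+2k))(η-1/2)(x) - (k/(1+2k))((f'-φ')/φ')(x), where f' - φ' = μφ' on [0,1-δ] and dμ_y is a probability measure supported where η - 1/2 ≥ some positive bound, satisfies H(x,y) ≥ c₀ > 0 for μ small enough, with c₀ depending only on k. -/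
open Set MeasureTheory

set_option maxHeartbeats 1600000

/-- The key lower bound `H(x,y) ≥ c₀ > 0` for the one-dimensional construction, in the case
`0 ≤ x ≤ 1 - δ`, with `c₀` depending only on `k` and `μ` small enough. -/
theorem stmt18 (k : ℕ) (hk : 1 ≤ k) :
    ∃ c₀ > (0 : ℝ), ∃ μ₀ > (0 : ℝ), ∀ (δ μc : ℝ) (η φ f : ℝ → ℝ),
      0 < δ → δ < 1 / 2 → 0 < μc → μc ≤ μ₀ →
      ContinuousOn η (Icc 0 1) →
      ConcaveOn ℝ (Icc 0 1) η →
      AntitoneOn η (Icc (1 - δ) 1) →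
      (∀ s ∈ Icc (0 : ℝ) (1 - δ), η s = 1 + μc) →
      (∀ s ∈ Icc (0 : ℝ) 1, min 1 ((1 + Real.sqrt (1 - s) / Real.sqrt δ) / 2) ≤ η s) →
      η 1 = 1 / 2 →
      (∀ s ∈ Ico (0 : ℝ) 1, 0 < deriv (deriv φ) s) →
      (∀ s ∈ Icc (0 : ℝ) (1 - δ), 0 < deriv φ s) →
      (∀ s ∈ Icc (0 : ℝ) (1 - δ), deriv f s = (1 + μc) * deriv φ s) →
      (∀ y ∈ Icc (1 - 2 * δ) 1,
        AntitoneOn (fun s => deriv (deriv φ) s * (y - s)) (Icc (1 - 2 * δ) y)) →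
      ∀ x ∈ Icc (0 : ℝ) (1 - δ), ∀ y ∈ Icc (0 : ℝ) 1, x ≠ y →
      IntervalIntegrable (fun s => deriv (deriv φ) s * (y - s)) volume x y →
      IntervalIntegrable (fun s => (η s - 1 / 2) * (deriv (deriv φ) s * (y - s)))
        volume x y →
      c₀ ≤ (∫ s in x..y, (η s - 1 / 2) * (deriv (deriv φ) s * (y - s))) /
            (∫ s in x..y, deriv (deriv φ) s * (y - s)) -
          1 / (1 + 2 * (k : ℝ)) * (η x - 1 / 2) -
          (k : ℝ) / (1 + 2 * (k : ℝ)) * ((deriv f x - deriv φ x) / deriv φ x) := by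
  refine ⟨1/100, by norm_num, 1/100, by norm_num, ?_⟩
  intro δ μc η φ f hδ0 hδ2 hμ0 hμ1 _hηc _hηcc _hηanti hηeq hηmin _hη1 hφ'' hφ' hf' hmono
    x hx y hy hxy hgint hhgint
  obtain ⟨hx0, hx1⟩ := hx
  obtain ⟨hy0, hy1⟩ := hy
  -- key ratio bound
  have key : (19:ℝ)/100 ≤
      (∫ s in x..y, (η s - 1 / 2) * (deriv (deriv φ) s * (y - s))) /
        (∫ s in x..y, deriv (deriv φ) s * (y - s)) := by
    rcases le_or_gt y (1 - δ) with hyδ | hyδ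
    · -- Case A : the whole interval lies in [0, 1-δ], where η is constant
      have hEq : EqOn (fun s => (η s - 1 / 2) * (deriv (deriv φ) s * (y - s)))
          (fun s => (1/2 + μc) * (deriv (deriv φ) s * (y - s))) (uIcc x y) := by
        intro s hs
        have hs' : s ∈ Icc (0:ℝ) (1 - δ) := by
          have h1 : min x y ≤ s := hs.1
          have h2 : s ≤ max x y := hs.2
          constructor
          · have : (0:ℝ) ≤ min x y := le_min hx0 hy0
            linarith
          · have : max x y ≤ 1 - δ := max_le hx1 hyδ
            linarith
        have := hηeq s hs'
        simp only [this]
        ring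
      have hIeq : (∫ s in x..y, (η s - 1 / 2) * (deriv (deriv φ) s * (y - s)))
          = (1/2 + μc) * ∫ s in x..y, deriv (deriv φ) s * (y - s) := by
        rw [intervalIntegral.integral_congr hEq, intervalIntegral.integral_const_mul]
      have hJpos : 0 < ∫ s in x..y, deriv (deriv φ) s * (y - s) := by
        rcases lt_or_gt_of_ne hxy with hlt | hlt
        · apply intervalIntegral.intervalIntegral_pos_of_pos_on hgint _ hlt
          intro s hs
          have hs0 : 0 ≤ s := le_trans hx0 hs.1.le
          have hs1 : s < 1 := by linarith [hs.2, hyδ]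
          exact mul_pos (hφ'' s ⟨hs0, hs1⟩) (by linarith [hs.2])
        · have hgneg : IntervalIntegrable (fun s => -(deriv (deriv φ) s * (y - s)))
              volume y x := hgint.symm.neg
          have hpos : 0 < ∫ s in y..x, -(deriv (deriv φ) s * (y - s)) := by
            apply intervalIntegral.intervalIntegral_pos_of_pos_on hgneg _ hlt
            intro s hs
            have hs0 : 0 ≤ s := le_trans hy0 hs.1.le
            have hs1 : s < 1 := by linarith [hs.2, hx1, hδ0]
            have hA := hφ'' s ⟨hs0, hs1⟩
            have hys : y - s < 0 := by linarith [hs.1]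
            have h2 : deriv (deriv φ) s * (y - s) < 0 := mul_neg_of_pos_of_neg hA hys
            linarith
          rw [intervalIntegral.integral_neg] at hpos
          rw [intervalIntegral.integral_symm]
          linarith
      rw [hIeq, mul_div_assoc, div_self hJpos.ne', mul_one]
      linarith
    · -- Case B : y > 1 - δ
      have hxy' : x < y := lt_of_le_of_lt hx1 hyδ
      set q : ℝ := max x (1 - 2*δ) with hq
      set p : ℝ := (q + 2*y)/3 with hp
      have hq0 : 0 ≤ q := le_trans hx0 (le_max_left _ _)
      have hq2δ : 1 - 2*δ ≤ q := le_max_right _ _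
      have hqδ : q ≤ 1 - δ := max_le hx1 (by linarith)
      have hxq : x ≤ q := le_max_left _ _
      have hqy : q < y := lt_of_le_of_lt hqδ hyδ
      have hqp : q < p := by rw [hp]; linarith
      have hpy : p < y := by rw [hp]; linarith
      have hp1 : p < 1 := by rw [hp]; nlinarith [hqδ, hy1, hδ0]
      -- integrability on subintervals
      have hsub1 : uIcc x q ⊆ uIcc x y := by
        rw [uIcc_of_le hxq, uIcc_of_le hxy'.le]
        exact Icc_subset_Icc le_rfl (by linarith)
      have hsub2 : uIcc q p ⊆ uIcc x y := by
        rw [uIcc_of_le hqp.le, uIcc_of_le hxy'.le]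
        exact Icc_subset_Icc hxq (by linarith)
      have hsub3 : uIcc p y ⊆ uIcc x y := by
        rw [uIcc_of_le hpy.le, uIcc_of_le hxy'.le]
        exact Icc_subset_Icc (by linarith) le_rfl
      have hg1 := hgint.mono_set hsub1
      have hg2 := hgint.mono_set hsub2
      have hg3 := hgint.mono_set hsub3
      have hhg1 := hhgint.mono_set hsub1
      have hhg2 := hhgint.mono_set hsub2
      have hhg3 := hhgint.mono_set hsub3
      set J1 := ∫ s in x..q, deriv (deriv φ) s * (y - s) with hJ1def
      set J2 := ∫ s in q..p, deriv (deriv φ) s * (y - s) with hJ2def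
      set J3 := ∫ s in p..y, deriv (deriv φ) s * (y - s) with hJ3def
      set I1 := ∫ s in x..q, (η s - 1 / 2) * (deriv (deriv φ) s * (y - s)) with hI1def
      set I2 := ∫ s in q..p, (η s - 1 / 2) * (deriv (deriv φ) s * (y - s)) with hI2def
      set I3 := ∫ s in p..y, (η s - 1 / 2) * (deriv (deriv φ) s * (y - s)) with hI3def
      have hJsplit : J1 + J2 + J3 = ∫ s in x..y, deriv (deriv φ) s * (y - s) := by
        rw [intervalIntegral.integral_add_adjacent_intervals hg1 hg2]
        exact intervalIntegral.integral_add_adjacent_intervals (hg1.trans hg2) hg3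
      have hIsplit : I1 + I2 + I3 = ∫ s in x..y, (η s - 1 / 2) * (deriv (deriv φ) s * (y - s)) := by
        rw [intervalIntegral.integral_add_adjacent_intervals hhg1 hhg2]
        exact intervalIntegral.integral_add_adjacent_intervals (hhg1.trans hhg2) hhg3
      -- pointwise facts
      have hgpos : ∀ s ∈ Icc x p, 0 < deriv (deriv φ) s * (y - s) := by
        intro s hs
        have hs0 : 0 ≤ s := le_trans hx0 hs.1
        have hs1 : s < 1 := lt_of_le_of_lt hs.2 hp1
        exact mul_pos (hφ'' s ⟨hs0, hs1⟩) (by linarith [hs.2, hpy])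
      have hgnn3 : ∀ s ∈ Icc p y, 0 ≤ deriv (deriv φ) s * (y - s) := by
        intro s hs
        rcases lt_or_ge s 1 with h1 | h1
        · have hs0 : 0 ≤ s := le_trans (by linarith : (0:ℝ) ≤ p) hs.1
          exact mul_nonneg (hφ'' s ⟨hs0, h1⟩).le (by linarith [hs.2])
        · have : s = 1 := le_antisymm (le_trans hs.2 hy1) h1
          have : y - s = 0 := by rw [this]; linarith [le_antisymm hy1 (this ▸ hs.2)]
          rw [this, mul_zero]
      -- nonnegativity of η - 1/2 on [0,1]
      have hηnn : ∀ s ∈ Icc (0:ℝ) 1, (0:ℝ) ≤ η s - 1/2 := by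
        intro s hs
        have h := hηmin s hs
        have hsq : 0 ≤ Real.sqrt (1 - s) / Real.sqrt δ :=
          div_nonneg (Real.sqrt_nonneg _) (Real.sqrt_nonneg _)
        have : min 1 ((1 + Real.sqrt (1 - s) / Real.sqrt δ) / 2) ≥ 1/2 :=
          le_min (by norm_num) (by linarith)
        linarith
      -- η bound on [q,p]
      have hη2 : ∀ s ∈ Icc q p, (57:ℝ)/200 ≤ η s - 1/2 := by
        intro s hs
        have hs01 : s ∈ Icc (0:ℝ) 1 := ⟨le_trans hq0 hs.1, le_trans hs.2 hp1.le⟩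
        have h1s : δ/3 ≤ 1 - s := by
          have : s ≤ p := hs.2
          rw [hp] at this
          have := hqδ
          have := hy1
          linarith
        have hsq1 : (57:ℝ)/100 * Real.sqrt δ ≤ Real.sqrt (1 - s) := by
          have h0 : δ * ((57:ℝ)/100)^2 ≤ 1 - s := by nlinarith
          calc (57:ℝ)/100 * Real.sqrt δ = Real.sqrt (δ * ((57:ℝ)/100)^2) := by
                rw [Real.sqrt_mul hδ0.le, Real.sqrt_sq (by norm_num)]; ring
            _ ≤ Real.sqrt (1 - s) := Real.sqrt_le_sqrt h0
        have hsqδ : 0 < Real.sqrt δ := Real.sqrt_pos.2 hδ0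
        have hsq2 : (57:ℝ)/100 ≤ Real.sqrt (1 - s) / Real.sqrt δ := by
          rw [le_div_iff₀ hsqδ]
          linarith
        have h := hηmin s hs01
        have : min 1 ((1 + Real.sqrt (1 - s) / Real.sqrt δ) / 2) ≥ 157/200 :=
          le_min (by norm_num) (by linarith)
        linarith
      -- J bounds
      have hJ1nn : 0 ≤ J1 :=
        intervalIntegral.integral_nonneg hxq
          (fun s hs => (hgpos s ⟨hs.1, le_trans hs.2 hqp.le⟩).le)
      have hJ2pos : 0 < J2 := by
        apply intervalIntegral.intervalIntegral_pos_of_pos_on hg2 _ hqp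
        exact fun s hs => hgpos s ⟨le_trans hxq hs.1.le, hs.2.le⟩
      have hJ3nn : 0 ≤ J3 := intervalIntegral.integral_nonneg hpy.le hgnn3
      -- antitonicity
      have hanti := hmono y ⟨by linarith, hy1⟩
      have hJ3le : J3 ≤ (y - p) * (deriv (deriv φ) p * (y - p)) := by
        have h : J3 ≤ ∫ _s in p..y, deriv (deriv φ) p * (y - p) := by
          apply intervalIntegral.integral_mono_on hpy.le hg3 (intervalIntegrable_const)
          intro s hs
          exact hanti ⟨le_trans hq2δ hqp.le, hpy.le⟩ ⟨by linarith [hs.1], hs.2⟩ hs.1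
        rwa [intervalIntegral.integral_const, smul_eq_mul] at h
      have hJ2ge : (p - q) * (deriv (deriv φ) p * (y - p)) ≤ J2 := by
        have h : (∫ _s in q..p, deriv (deriv φ) p * (y - p)) ≤ J2 := by
          apply intervalIntegral.integral_mono_on hqp.le (intervalIntegrable_const) hg2
          intro s hs
          exact hanti ⟨le_trans hq2δ hs.1, le_trans hs.2 hpy.le⟩
            ⟨le_trans hq2δ hqp.le, hpy.le⟩ hs.2
        rwa [intervalIntegral.integral_const, smul_eq_mul] at h
      have hJ3J2 : J3 ≤ J2 / 2 := by
        have hyp : y - p = (p - q)/2 := by rw [hp]; ring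
        have h5 : (y - p) * (deriv (deriv φ) p * (y - p)) =
            1/2 * ((p - q) * (deriv (deriv φ) p * (y - p))) := by
          rw [hyp]; ring
        linarith [hJ3le, hJ2ge]
      -- I bounds
      have hI1ge : 1/2 * J1 ≤ I1 := by
        rw [hJ1def, hI1def, ← intervalIntegral.integral_const_mul]
        apply intervalIntegral.integral_mono_on hxq (hg1.const_mul _) hhg1
        intro s hs
        have hs' : s ∈ Icc (0:ℝ) (1 - δ) := ⟨le_trans hx0 hs.1, le_trans hs.2 hqδ⟩
        have := hηeq s hs'
        have hgnn := (hgpos s ⟨hs.1, le_trans hs.2 hqp.le⟩).le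
        rw [this]
        apply mul_le_mul_of_nonneg_right _ hgnn
        linarith
      have hI2ge : 57/200 * J2 ≤ I2 := by
        rw [hJ2def, hI2def, ← intervalIntegral.integral_const_mul]
        apply intervalIntegral.integral_mono_on hqp.le (hg2.const_mul _) hhg2
        intro s hs
        have hgnn := (hgpos s ⟨le_trans hxq hs.1, hs.2⟩).le
        exact mul_le_mul_of_nonneg_right (hη2 s hs) hgnn
      have hI3ge : 0 ≤ I3 := by
        apply intervalIntegral.integral_nonneg hpy.le
        intro s hs
        have hs01 : s ∈ Icc (0:ℝ) 1 := ⟨le_trans (by linarith : (0:ℝ) ≤ p) hs.1,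
          le_trans hs.2 hy1⟩
        exact mul_nonneg (hηnn s hs01) (hgnn3 s hs)
      -- combine
      clear_value J1 J2 J3 I1 I2 I3
      clear_value q p
      have hJpos : 0 < ∫ s in x..y, deriv (deriv φ) s * (y - s) := by
        rw [← hJsplit]; linarith
      rw [le_div_iff₀ hJpos, ← hJsplit, ← hIsplit]
      linarith
  -- the two subtracted terms
  have hηx : η x = 1 + μc := hηeq x ⟨hx0, hx1⟩
  have hφx : 0 < deriv φ x := hφ' x ⟨hx0, hx1⟩
  have hfx : deriv f x = (1 + μc) * deriv φ x := hf' x ⟨hx0, hx1⟩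
  have hratio : (deriv f x - deriv φ x) / deriv φ x = μc := by
    have h : deriv f x - deriv φ x = μc * deriv φ x := by rw [hfx]; ring
    rw [h, mul_div_assoc, div_self hφx.ne', mul_one]
  rw [hηx, hratio]
  have hK : (1:ℝ) ≤ (k:ℝ) := by exact_mod_cast hk
  have hA : (3:ℝ) ≤ 1 + 2*(k:ℝ) := by linarith
  have hApos : (0:ℝ) < 1 + 2*(k:ℝ) := by linarith
  have ht1 : 1 / (1 + 2*(k:ℝ)) * (1 + μc - 1/2) ≤ 17/100 := by
    rw [one_div, ← div_eq_inv_mul]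
    calc (1 + μc - 1/2) / (1 + 2*(k:ℝ)) ≤ (51/100) / 3 :=
          div_le_div₀ (by norm_num) (by linarith) (by norm_num) hA
      _ = 17/100 := by norm_num
  have ht2 : (k:ℝ) / (1 + 2*(k:ℝ)) * μc ≤ 1/200 := by
    have h1 : (k:ℝ) / (1 + 2*(k:ℝ)) ≤ 1/2 := by
      rw [div_le_iff₀ hApos]; linarith
    have h2 : (k:ℝ) / (1 + 2*(k:ℝ)) * μc ≤ 1/2 * μc :=
      mul_le_mul_of_nonneg_right h1 hμ0.le
    linarith
  linarith
end
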